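/- arXiv:2410.14149 — 2 statements merged into one kernel-verified Lean document; each statement's English description precedes it below -/
import Mathlib

section
/- The Jacobi triple product specialization: φ(q) := ∑_{n=-∞}^∞ q^{n^2} = (-q;q^2)_∞^2 (q^2;q^2)_∞ for |q| < 1. -/
/-!
Put `x = q^(-2N)` in the finite q-binomial theorem
`∏_{j<m} (1 + x q^(2j+1)) = ∑_k [m, k]_{q²} q^(k²) x^k` with `m = 2N`: after reflecting half
of the factors this becomes the finite Jacobi identity
`(-q; q²)_N² = ∑_{|n| ≤ N} [2N, N + n]_{q²} q^(n²)`.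
Since `[k + l, k]_Q = (Q; Q)_{k+l} / ((Q; Q)_k (Q; Q)_l)` and the partial products converge to
`(Q; Q)_∞ ≠ 0`, the coefficients are uniformly bounded and tend to `1 / (q²; q²)_∞` as `N → ∞`,
so by dominated convergence
`(-q; q²)_∞² = φ(q) / (q²; q²)_∞`.
-/

open scoped Topology

/-- The infinite q-Pochhammer symbol `(a; q)_∞ = ∏_{n=0}^∞ (1 - a q^n)`. -/
noncomputable def qPoch (a q : ℂ) : ℂ := ∏' n : ℕ, (1 - a * q ^ n)

/-- The Rogers–Ramanujan continued fraction in product form. -/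
noncomputable def RR (q : ℂ) : ℂ :=
  qPoch q (q ^ 5) * qPoch (q ^ 4) (q ^ 5) / (qPoch (q ^ 2) (q ^ 5) * qPoch (q ^ 3) (q ^ 5))

open Filter Finset

section CommSemiring

variable {R : Type*} [CommSemiring R]

def gaussBinom (q : R) : ℕ → ℕ → R
  | _, 0 => 1
  | 0, _ + 1 => 0
  | m + 1, k + 1 => q ^ (k + 1) * gaussBinom q m (k + 1) + gaussBinom q m k

@[simp]
lemma gaussBinom_zero_right (q : R) (m : ℕ) : gaussBinom q m 0 = 1 := by
  cases m <;> rfl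

lemma gaussBinom_succ_succ (q : R) (m k : ℕ) :
    gaussBinom q (m + 1) (k + 1) = q ^ (k + 1) * gaussBinom q m (k + 1) + gaussBinom q m k :=
  rfl

lemma gaussBinom_eq_zero_of_lt (q : R) : ∀ {m k : ℕ}, m < k → gaussBinom q m k = 0
  | 0, _ + 1, _ => rfl
  | m + 1, k + 1, h => by
    rw [gaussBinom_succ_succ, gaussBinom_eq_zero_of_lt q (by omega),
      gaussBinom_eq_zero_of_lt q (by omega), mul_zero, add_zero]

lemma gaussBinom_self (q : R) : ∀ m : ℕ, gaussBinom q m m = 1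
  | 0 => rfl
  | m + 1 => by
    rw [gaussBinom_succ_succ, gaussBinom_eq_zero_of_lt q (lt_add_one m), gaussBinom_self q m,
      mul_zero, zero_add]

theorem prod_one_add_mul_pow_odd (q x : R) (m : ℕ) :
    ∏ j ∈ range m, (1 + x * q ^ (2 * j + 1)) =
      ∑ k ∈ range (m + 1), gaussBinom (q ^ 2) m k * q ^ (k ^ 2) * x ^ k := by
  induction m generalizing x with
  | zero => simp
  | succ m ih =>
    set T : ℕ → R := fun k => gaussBinom (q ^ 2) m k * q ^ (k ^ 2) * (x * q ^ 2) ^ k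
    have hterm : ∀ k, gaussBinom (q ^ 2) (m + 1) (k + 1) * q ^ ((k + 1) ^ 2) * x ^ (k + 1) =
        T (k + 1) + x * q * T k := by
      intro k
      simp only [T, gaussBinom_succ_succ]
      ring
    have hT_top : T (m + 1) = 0 := by simp [T, gaussBinom_eq_zero_of_lt _ (lt_add_one m)]
    calc ∏ j ∈ range (m + 1), (1 + x * q ^ (2 * j + 1))
        = (∏ j ∈ range m, (1 + x * q ^ 2 * q ^ (2 * j + 1))) * (1 + x * q) := by
          rw [prod_range_succ']
          congr 1
          · exact prod_congr rfl fun j _ => by ring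
          · ring
      _ = (∑ k ∈ range (m + 1), T k) * (1 + x * q) := by rw [ih]
      _ = T 0 + ∑ k ∈ range (m + 1), (T (k + 1) + x * q * T k) := by
          rw [sum_add_distrib, ← mul_sum, ← add_assoc, add_comm (T 0), ← sum_range_succ',
            sum_range_succ _ (m + 1), hT_top]
          ring
      _ = ∑ k ∈ range (m + 2), gaussBinom (q ^ 2) (m + 1) k * q ^ (k ^ 2) * x ^ k := by
          rw [sum_range_succ' _ (m + 1), add_comm]
          simp only [hterm]
          simp [T]

lemma prod_range_pow_two_mul_add_one (q : R) (N : ℕ) :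
    ∏ j ∈ range N, q ^ (2 * j + 1) = q ^ (N ^ 2) := by
  induction N with
  | zero => simp
  | succ N ih => rw [prod_range_succ, ih, ← pow_add]; ring_nf

lemma pow_sq_mul_prod_one_add_mul_pow_odd (q x : R) (N : ℕ) (hx : x * q ^ (2 * N) = 1) :
    q ^ (N ^ 2) * ∏ j ∈ range (2 * N), (1 + x * q ^ (2 * j + 1)) =
      (∏ j ∈ range N, (1 + q ^ (2 * j + 1))) ^ 2 := by
  rw [show 2 * N = N + N by ring] at hx ⊢
  rw [prod_range_add, ← prod_range_pow_two_mul_add_one,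
    ← prod_range_reflect (fun j => q ^ (2 * j + 1)), ← mul_assoc, ← prod_mul_distrib, sq]
  congr 1
  · rw [← prod_range_reflect (fun j => 1 + q ^ (2 * j + 1))]
    refine prod_congr rfl fun j hj => ?_
    have hexp : 2 * (N - 1 - j) + 1 + (2 * j + 1) = N + N := by
      have := mem_range.1 hj
      omega
    calc q ^ (2 * (N - 1 - j) + 1) * (1 + x * q ^ (2 * j + 1))
        = q ^ (2 * (N - 1 - j) + 1) + x * q ^ (2 * (N - 1 - j) + 1 + (2 * j + 1)) := by ring
      _ = 1 + q ^ (2 * (N - 1 - j) + 1) := by rw [hexp, hx, add_comm]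
  · refine prod_congr rfl fun j _ => ?_
    rw [show 2 * (N + j) + 1 = N + N + (2 * j + 1) by ring, pow_add, ← mul_assoc, hx, one_mul]

lemma pow_sq_mul_pow_sq_mul_pow (q x : R) (N k : ℕ) (hx : x * q ^ (2 * N) = 1) :
    q ^ (N ^ 2) * (q ^ (k ^ 2) * x ^ k) = q ^ (((k : ℤ) - N).natAbs ^ 2) := by
  have hexp : N ^ 2 + k ^ 2 = ((k : ℤ) - N).natAbs ^ 2 + 2 * N * k := by
    zify
    rw [sq_abs]
    ring
  calc q ^ (N ^ 2) * (q ^ (k ^ 2) * x ^ k)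
      = q ^ (((k : ℤ) - N).natAbs ^ 2) * (x * q ^ (2 * N)) ^ k := by
        rw [mul_pow, ← pow_mul, ← mul_assoc, ← pow_add, hexp, pow_add]; ring
    _ = q ^ (((k : ℤ) - N).natAbs ^ 2) := by rw [hx, one_pow, mul_one]

end CommSemiring

section CommRing

variable {R : Type*} [CommRing R]

def qPochPartial (a q : R) (n : ℕ) : R := ∏ i ∈ range n, (1 - a * q ^ i)

lemma qPochPartial_succ (a q : R) (n : ℕ) :
    qPochPartial a q (n + 1) = qPochPartial a q n * (1 - a * q ^ n) :=
  prod_range_succ _ _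

theorem gaussBinom_mul_qPochPartial (q : R) (k l : ℕ) :
    gaussBinom q (k + l) k * qPochPartial q q k * qPochPartial q q l =
      qPochPartial q q (k + l) := by
  induction k generalizing l with
  | zero => simp [qPochPartial]
  | succ k ihk =>
    induction l with
    | zero => simp [gaussBinom_self, qPochPartial]
    | succ l ihl =>
      have h₁ := ihk (l + 1)
      rw [show k + (l + 1) = k + l + 1 by omega] at h₁
      rw [show k + 1 + l = k + l + 1 by omega] at ihl
      rw [show k + 1 + (l + 1) = k + l + 1 + 1 by omega, gaussBinom_succ_succ,
        qPochPartial_succ q q (k + l + 1)]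
      simp only [qPochPartial_succ q q k, qPochPartial_succ q q l] at ihl h₁ ⊢
      linear_combination (q ^ (k + 1) * (1 - q * q ^ l)) * ihl + (1 - q * q ^ k) * h₁

end CommRing

theorem qPochPartial_sq_eq_sum_gaussBinom {K : Type*} [Field K] {q : K} (hq : q ≠ 0)
    (N : ℕ) :
    qPochPartial (-q) (q ^ 2) N ^ 2 = ∑ n ∈ Icc (-N : ℤ) N,
      gaussBinom (q ^ 2) (2 * N) (N + n).toNat * q ^ (n.natAbs ^ 2) := by
  have hx : (q ^ (2 * N))⁻¹ * q ^ (2 * N) = 1 := inv_mul_cancel₀ (pow_ne_zero _ hq)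
  have hprod : qPochPartial (-q) (q ^ 2) N = ∏ j ∈ range N, (1 + q ^ (2 * j + 1)) :=
    prod_congr rfl fun j _ => by ring
  rw [hprod, ← pow_sq_mul_prod_one_add_mul_pow_odd q _ N hx, prod_one_add_mul_pow_odd, mul_sum]
  refine sum_nbij' (fun k => (k : ℤ) - N) (fun n => ((N : ℤ) + n).toNat) ?_ ?_ ?_ ?_ ?_
  · intro k hk
    simp only [mem_range, mem_Icc] at hk ⊢
    omega
  · intro n hn
    simp only [mem_range, mem_Icc] at hn ⊢
    omega
  · intro k _
    simp
  · intro n hn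
    simp only [mem_Icc] at hn
    omega
  · intro k _
    simp only [add_sub_cancel, Int.toNat_natCast]
    linear_combination gaussBinom (q ^ 2) (2 * N) k * pow_sq_mul_pow_sq_mul_pow q _ N k hx

section Analytic

variable {q : ℂ}

lemma summable_norm_neg_mul_pow (a : ℂ) (hq : ‖q‖ < 1) :
    Summable fun i : ℕ => ‖-(a * q ^ i)‖ := by
  simpa [norm_mul, norm_pow] using
    (summable_geometric_of_lt_one (norm_nonneg q) hq).mul_left ‖a‖

lemma tendsto_qPochPartial (a : ℂ) (hq : ‖q‖ < 1) :
    Tendsto (qPochPartial a q) atTop (𝓝 (qPoch a q)) := by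
  have hm := multipliable_one_add_of_summable (summable_norm_neg_mul_pow a hq)
  simp only [← sub_eq_add_neg] at hm
  exact hm.hasProd.tendsto_prod_nat

lemma one_sub_mul_pow_ne_zero (hq : ‖q‖ < 1) (i : ℕ) : 1 - q * q ^ i ≠ 0 := by
  rw [sub_ne_zero, ← pow_succ']
  intro h
  exact (pow_lt_one₀ (norm_nonneg q) hq i.succ_ne_zero).ne (by rw [← norm_pow, ← h, norm_one])

lemma qPoch_self_ne_zero (hq : ‖q‖ < 1) : qPoch q q ≠ 0 := by
  simpa only [qPoch, ← sub_eq_add_neg] using tprod_one_add_ne_zero_of_summable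
    (fun i => by simpa only [← sub_eq_add_neg] using one_sub_mul_pow_ne_zero hq i)
    (summable_norm_neg_mul_pow q hq)

lemma qPochPartial_self_ne_zero (hq : ‖q‖ < 1) (n : ℕ) : qPochPartial q q n ≠ 0 :=
  prod_ne_zero_iff.2 fun i _ => one_sub_mul_pow_ne_zero hq i

lemma gaussBinom_add_eq_mul_inv (hq : ‖q‖ < 1) (k l : ℕ) :
    gaussBinom q (k + l) k =
      qPochPartial q q (k + l) * (qPochPartial q q k)⁻¹ * (qPochPartial q q l)⁻¹ := by
  rw [← gaussBinom_mul_qPochPartial]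
  field_simp [qPochPartial_self_ne_zero hq]

lemma exists_forall_norm_gaussBinom_le (hq : ‖q‖ < 1) :
    ∃ B, 0 ≤ B ∧ ∀ m k, ‖gaussBinom q m k‖ ≤ B := by
  have hP := tendsto_qPochPartial q hq
  obtain ⟨C, hC⟩ := hP.norm.bddAbove_range
  obtain ⟨D, hD⟩ := (hP.inv₀ (qPoch_self_ne_zero hq)).norm.bddAbove_range
  have hC0 : 0 ≤ C := (norm_nonneg _).trans (hC ⟨0, rfl⟩)
  have hD0 : 0 ≤ D := (norm_nonneg _).trans (hD ⟨0, rfl⟩)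
  refine ⟨C * D * D, by positivity, fun m k => ?_⟩
  rcases le_or_gt k m with hkm | hmk
  · obtain ⟨l, rfl⟩ := Nat.exists_eq_add_of_le hkm
    rw [gaussBinom_add_eq_mul_inv hq, norm_mul, norm_mul]
    gcongr
    exacts [hC ⟨_, rfl⟩, hD ⟨_, rfl⟩, hD ⟨_, rfl⟩]
  · rw [gaussBinom_eq_zero_of_lt _ hmk, norm_zero]
    positivity

lemma tendsto_gaussBinom (hq : ‖q‖ < 1) {k l : ℕ → ℕ} (hk : Tendsto k atTop atTop)
    (hl : Tendsto l atTop atTop) :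
    Tendsto (fun N => gaussBinom q (k N + l N) (k N)) atTop (𝓝 (qPoch q q)⁻¹) := by
  have hP := tendsto_qPochPartial q hq
  have hP0 := qPoch_self_ne_zero hq
  have h := ((hP.comp (hk.atTop_add_atTop hl)).mul ((hP.comp hk).inv₀ hP0)).mul
    ((hP.comp hl).inv₀ hP0)
  rw [mul_inv_cancel₀ hP0, one_mul] at h
  simpa only [gaussBinom_add_eq_mul_inv hq, Function.comp_apply] using h

lemma summable_mul_pow_natAbs (B : ℝ) (hq : ‖q‖ < 1) :
    Summable fun n : ℤ => B * ‖q‖ ^ n.natAbs := by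
  apply Summable.mul_left
  apply Summable.of_nat_of_neg <;>
    simpa using summable_geometric_of_lt_one (norm_nonneg q) hq

theorem tendsto_sum_gaussBinom_mul_pow_sq (hq : ‖q‖ < 1) :
    Tendsto (fun N : ℕ =>
        ∑ n ∈ Icc (-N : ℤ) N, gaussBinom (q ^ 2) (2 * N) (N + n).toNat * q ^ (n.natAbs ^ 2))
      atTop (𝓝 (∑' n : ℤ, (qPoch (q ^ 2) (q ^ 2))⁻¹ * q ^ (n.natAbs ^ 2))) := by
  have hQ : ‖q ^ 2‖ < 1 := by rw [norm_pow]; exact pow_lt_one₀ (norm_nonneg q) hq two_ne_zero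
  obtain ⟨B, hB0, hB⟩ := exists_forall_norm_gaussBinom_le hQ
  let F : ℕ → ℤ → ℂ := fun N n => if n ∈ Icc (-N : ℤ) N then
    gaussBinom (q ^ 2) (2 * N) (N + n).toNat * q ^ (n.natAbs ^ 2) else 0
  have hF : ∀ N, ∑' n, F N n =
      ∑ n ∈ Icc (-N : ℤ) N, gaussBinom (q ^ 2) (2 * N) (N + n).toNat * q ^ (n.natAbs ^ 2) :=
    fun N => (tsum_eq_sum fun n hn => if_neg hn).trans (sum_congr rfl fun n hn => if_pos hn)
  have hlim : ∀ n : ℤ,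
      Tendsto (F · n) atTop (𝓝 ((qPoch (q ^ 2) (q ^ 2))⁻¹ * q ^ (n.natAbs ^ 2))) := by
    intro n
    have hk : Tendsto (fun N : ℕ => ((N : ℤ) + n).toNat) atTop atTop :=
      tendsto_atTop_atTop.2 fun b => ⟨b + n.natAbs, fun N hN => by omega⟩
    have hl : Tendsto (fun N : ℕ => ((N : ℤ) - n).toNat) atTop atTop :=
      tendsto_atTop_atTop.2 fun b => ⟨b + n.natAbs, fun N hN => by omega⟩
    refine ((tendsto_gaussBinom hQ hk hl).mul_const _).congr' ?_
    filter_upwards [eventually_ge_atTop n.natAbs] with N hN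
    have hn : n ∈ Icc (-N : ℤ) N := mem_Icc.2 ⟨by omega, by omega⟩
    simp only [F, if_pos hn]
    congr 3
    omega
  have hbound : ∀ N n, ‖F N n‖ ≤ B * ‖q‖ ^ n.natAbs := by
    intro N n
    simp only [F]
    split_ifs
    · rw [norm_mul, norm_pow]
      exact mul_le_mul (hB _ _)
        (pow_le_pow_of_le_one (norm_nonneg _) hq.le (Nat.le_self_pow two_ne_zero _))
        (by positivity) hB0
    · rw [norm_zero]
      positivity
  simpa only [hF] using tendsto_tsum_of_dominated_convergence (summable_mul_pow_natAbs B hq)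
    hlim (Eventually.of_forall hbound)

end Analytic

theorem stmt_1 (q : ℂ) (hq : ‖q‖ < 1) :
    ∑' n : ℤ, q ^ (n.natAbs ^ 2) = qPoch (-q) (q ^ 2) ^ 2 * qPoch (q ^ 2) (q ^ 2) := by
  rcases eq_or_ne q 0 with rfl | hq0
  · rw [tsum_eq_single 0 fun n hn => by simpa using hn]
    simp [qPoch]
  have hQ : ‖q ^ 2‖ < 1 := by rw [norm_pow]; exact pow_lt_one₀ (norm_nonneg q) hq two_ne_zero
  have hlim := (tendsto_sum_gaussBinom_mul_pow_sq hq).congr fun N =>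
    (qPochPartial_sq_eq_sum_gaussBinom hq0 N).symm
  have h := tendsto_nhds_unique hlim ((tendsto_qPochPartial (-q) hQ).pow 2)
  rw [tsum_mul_left] at h
  rw [← h, mul_comm _ (qPoch (q ^ 2) (q ^ 2)), mul_inv_cancel_left₀ (qPoch_self_ne_zero hQ)]
end

section
/- Euler's pentagonal-type product formula: (q;q)_∞ = ∑_{n=-∞}^∞ (-1)^n q^{n(3n-1)/2} for |q| < 1. -/
open scoped Topology

/-!
Telescoping the series `Aₖ = ∑ₙ x ^ ((k+1)n) ∏_{i ≤ n} (1 - x ^ (k+i+1))` expresses the product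
`∏ (1 - x ^ (n + 1))` as `∑_{k ≤ j} (-1) ^ k (x ^ (k(3k+1)/2) - x ^ ((k+1)(3k+2)/2))`
plus the remainder `(-1) ^ (j+1) x ^ ((j+1)(3j+4)/2) Aⱼ`; Mathlib does this in any topological ring
(`Pentagonal.tprod_one_sub_pow`), given that the series and products converge and the remainder
tends to `0`. For `‖x‖ < 1` every finite product `∏ (1 - x ^ j)` over distinct exponents has norm
at most `exp (1 - ‖x‖)⁻¹`, so everything is dominated by geometric series. Pairing the terms `-k`
and `k + 1` turns the sum over `ℕ` into the sum over `ℤ`.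
-/

open Finset Filter

theorem le_pentagonal_natCast (k : ℕ) : k ≤ pentagonal k := by
  have := two_mul_natCast_pentagonal k
  zify; nlinarith

theorem le_pentagonal_neg_natCast (k : ℕ) : k ≤ pentagonal (-k) := by
  have := two_mul_natCast_pentagonal_neg k
  zify; nlinarith

theorem le_pentagonal_natCast_add_one (k : ℕ) : k ≤ pentagonal (k + 1) := by
  exact_mod_cast (le_pentagonal_natCast (k + 1)).trans' k.le_succ

namespace Pentagonal

variable {R : Type*} [NormedCommRing R] [NormOneClass R] {x : R}

theorem norm_pow_le_pow_norm_of_le (hx : ‖x‖ < 1) {k n : ℕ} (h : k ≤ n) : ‖x ^ n‖ ≤ ‖x‖ ^ k :=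
  (norm_pow_le x n).trans (pow_le_pow_of_le_one (norm_nonneg x) hx.le h)

theorem summable_norm_pow_comp_of_le (hx : ‖x‖ < 1) {f : ℕ → ℕ} (hf : ∀ k, k ≤ f k) :
    Summable fun k ↦ ‖x ^ f k‖ :=
  (summable_geometric_of_lt_one (norm_nonneg x) hx).of_nonneg_of_le (fun _ ↦ norm_nonneg _)
    fun k ↦ norm_pow_le_pow_norm_of_le hx (hf k)

theorem norm_neg_one_pow_mul_le (k : ℕ) (a : R) : ‖(-1) ^ k * a‖ ≤ ‖a‖ :=
  calc ‖(-1) ^ k * a‖ ≤ ‖(-1 : R)‖ ^ k * ‖a‖ := (norm_mul_le _ _).trans (by grw [norm_pow_le])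
    _ = ‖a‖ := by rw [norm_neg, norm_one, one_pow, one_mul]

theorem norm_prod_one_sub_pow_le (hx : ‖x‖ < 1) (k m : ℕ) :
    ‖∏ i ∈ range m, (1 - x ^ (k + i + 1))‖ ≤ Real.exp (1 - ‖x‖)⁻¹ := by
  have hsum : ∑ i ∈ range m, ‖-x ^ (k + i + 1)‖ ≤ (1 - ‖x‖)⁻¹ := calc
    _ ≤ ∑ i ∈ range m, ‖x‖ ^ i :=
      sum_le_sum fun i _ ↦ (norm_neg _).trans_le (norm_pow_le_pow_norm_of_le hx (by omega))
    _ ≤ ‖x‖ ^ 0 / (1 - ‖x‖) := by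
      rw [range_eq_Ico]; exact geom_sum_Ico_le_of_lt_one (norm_nonneg x) hx
    _ = (1 - ‖x‖)⁻¹ := by rw [pow_zero, one_div]
  calc ‖∏ i ∈ range m, (1 - x ^ (k + i + 1))‖
      ≤ ‖∏ i ∈ range m, (1 + -x ^ (k + i + 1)) - 1‖ + ‖(1 : R)‖ := by
        simp_rw [← sub_eq_add_neg]; exact norm_le_norm_sub_add _ _
    _ ≤ Real.exp (∑ i ∈ range m, ‖-x ^ (k + i + 1)‖) := by
        grw [norm_prod_one_add_sub_one_le, norm_one, sub_add_cancel]
    _ ≤ Real.exp (1 - ‖x‖)⁻¹ := Real.exp_le_exp.2 hsum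

theorem norm_pow_mul_prod_one_sub_pow_le (hx : ‖x‖ < 1) (k n : ℕ) :
    ‖x ^ ((k + 1) * n) * ∏ i ∈ range (n + 1), (1 - x ^ (k + i + 1))‖ ≤
      Real.exp (1 - ‖x‖)⁻¹ * ‖x‖ ^ n := by
  grw [norm_mul_le, norm_prod_one_sub_pow_le hx, norm_pow_le_pow_norm_of_le hx (n := (k + 1) * n)
    (by nlinarith), mul_comm]

theorem tendsto_remainder_nhds_zero (hx : ‖x‖ < 1) :
    Tendsto (fun k ↦ (-1) ^ (k + 1) * x ^ ((k + 1) * (3 * k + 4) / 2) *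
      ∑' n, x ^ ((k + 1) * n) * ∏ i ∈ range (n + 1), (1 - x ^ (k + i + 1))) atTop (𝓝 0) := by
  have hgeom := (hasSum_geometric_of_lt_one (norm_nonneg x) hx).mul_left (Real.exp (1 - ‖x‖)⁻¹)
  have hbound : Tendsto (fun k ↦ ‖x‖ ^ k * (Real.exp (1 - ‖x‖)⁻¹ * (1 - ‖x‖)⁻¹)) atTop (𝓝 0) := by
    simpa using (tendsto_pow_atTop_nhds_zero_of_lt_one (norm_nonneg x) hx).mul_const
      (Real.exp (1 - ‖x‖)⁻¹ * (1 - ‖x‖)⁻¹)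
  refine squeeze_zero_norm (fun k ↦ ?_) hbound
  have hexp : k ≤ (k + 1) * (3 * k + 4) / 2 := by
    rw [Nat.le_div_iff_mul_le two_pos]; nlinarith
  rw [mul_assoc]
  grw [norm_neg_one_pow_mul_le, norm_mul_le, norm_pow_le_pow_norm_of_le hx hexp,
    tsum_of_norm_bounded hgeom (norm_pow_mul_prod_one_sub_pow_le hx k)]

variable [CompleteSpace R]

theorem summable_pow_mul_prod_one_sub_pow (hx : ‖x‖ < 1) (k : ℕ) :
    Summable fun n ↦ x ^ ((k + 1) * n) * ∏ i ∈ range (n + 1), (1 - x ^ (k + i + 1)) :=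
  .of_norm_bounded ((summable_geometric_of_lt_one (norm_nonneg x) hx).mul_left _)
    (norm_pow_mul_prod_one_sub_pow_le hx k)

theorem multipliable_one_sub_pow (hx : ‖x‖ < 1) (k : ℕ) :
    Multipliable fun n ↦ 1 - x ^ (n + k + 1) := by
  simp_rw [sub_eq_add_neg]
  exact multipliable_one_add_of_summable <| by
    simpa using summable_norm_pow_comp_of_le hx (f := fun n ↦ n + k + 1) (by omega)

theorem tprod_one_sub_pow_eq_tsum (hx : ‖x‖ < 1) :
    ∏' n, (1 - x ^ (n + 1)) =
      ∑' k : ℕ, (-1) ^ k * (x ^ pentagonal (-k) - x ^ pentagonal (k + 1)) := by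
  refine tprod_one_sub_pow (tendsto_pow_atTop_nhds_zero_of_norm_lt_one hx)
    (summable_pow_mul_prod_one_sub_pow hx) (multipliable_one_sub_pow hx) ?_
    (tendsto_remainder_nhds_zero hx)
  refine .of_norm_bounded ((summable_norm_pow_comp_of_le hx le_pentagonal_neg_natCast).add
    (summable_norm_pow_comp_of_le hx le_pentagonal_natCast_add_one)) fun k ↦ ?_
  exact (norm_neg_one_pow_mul_le k _).trans (norm_sub_le _ _)

theorem tprod_one_sub_pow_eq_tsum_int {𝕜 : Type*} [NormedField 𝕜] [CompleteSpace 𝕜] {x : 𝕜}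
    (hx : ‖x‖ < 1) :
    ∏' n, (1 - x ^ (n + 1)) = ∑' n : ℤ, (-1) ^ n * x ^ pentagonal n := by
  have hnorm {f : ℕ → ℕ} (hf : ∀ k, k ≤ f k) : Summable fun k ↦ ‖‖x‖ ^ f k‖ :=
    summable_norm_pow_comp_of_le (x := ‖x‖) (by rwa [norm_norm]) hf
  have hsum : Summable fun n : ℤ ↦ (-1 : 𝕜) ^ n * x ^ pentagonal n := by
    refine .of_norm (summable_int_iff_summable_nat_and_neg.2 ⟨?_, ?_⟩)
    · simpa using hnorm le_pentagonal_natCast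
    · simpa using hnorm le_pentagonal_neg_natCast
  have hsum_neg : Summable fun n : ℤ ↦ (-1 : 𝕜) ^ (-n) * x ^ pentagonal (-n) :=
    hsum.comp_injective neg_injective
  rw [tprod_one_sub_pow_eq_tsum hx, ← (Equiv.neg ℤ).tsum_eq]
  simp only [Equiv.neg_apply]
  rw [← tsum_nat_add_neg_add_one hsum_neg]
  refine tsum_congr fun k ↦ ?_
  rw [neg_neg, zpow_neg, zpow_add_one₀ (by norm_num), zpow_natCast, ← inv_pow, inv_neg_one]
  ring

end Pentagonal

theorem stmt_3 (q : ℂ) (hq : ‖q‖ < 1) :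
    qPoch q q = ∑' n : ℤ, (-1 : ℂ) ^ n * q ^ ((n * (3 * n - 1)) / 2 : ℤ) := by
  simp_rw [← natCast_pentagonal, zpow_natCast, ← Pentagonal.tprod_one_sub_pow_eq_tsum_int hq,
    qPoch, pow_succ']
end
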